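/- Under the discount-update hypotheses (γ ∈ (0,1), K ∈ S_γ with J_γ(K) > ℓ₀, Ĵ ∈ ℝ with |J_γ(K) − Ĵ| ≤ J_γ(K)/2, ζ ∈ (0,1), α = ℓ₀/(2Ĵ − ℓ₀), γ' = (1 + ζα)γ), the Gramian at the enlarged discount factor satisfies ‖Σ_K(γ')‖ ≤ 4Ĵ²/((1 − ζ)ℓ₀²). -/

import Mathlib

open Matrix

noncomputable section

/-- Spectral radius of a real square matrix: the largest modulus of a complex eigenvalue. -/
def specRad {n : ℕ} (M : Matrix (Fin n) (Fin n) ℝ) : ℝ :=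
  sSup {r : ℝ | ∃ μ ∈ spectrum ℂ (M.map (algebraMap ℝ ℂ)), r = ‖μ‖}

/-- Spectral (ℓ²→ℓ² operator) norm of a real matrix. -/
def spNorm {a b : ℕ} (M : Matrix (Fin a) (Fin b) ℝ) : ℝ :=
  ‖LinearMap.toContinuousLinearMap (Matrix.toEuclideanLin M)‖

/-- Frobenius norm of a real matrix. -/
def frobNorm {a b : ℕ} (M : Matrix (Fin a) (Fin b) ℝ) : ℝ :=
  Real.sqrt (∑ i, ∑ j, (M i j) ^ 2)

/-- Euclidean norm of a vector. -/
def vecNorm {a : ℕ} (x : Fin a → ℝ) : ℝ :=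
  Real.sqrt (∑ i, (x i) ^ 2)

variable {n m p : ℕ}

/-- Closed-loop matrix `A - BKC`. -/
def Acl (A : Matrix (Fin n) (Fin n) ℝ) (B : Matrix (Fin n) (Fin m) ℝ)
    (C : Matrix (Fin p) (Fin n) ℝ) (K : Matrix (Fin m) (Fin p) ℝ) : Matrix (Fin n) (Fin n) ℝ :=
  A - B * K * C

/-- Membership in the stabilizing set `S_γ`: `√γ · ρ(A − BKC) < 1`. -/
def inS (A : Matrix (Fin n) (Fin n) ℝ) (B : Matrix (Fin n) (Fin m) ℝ)
    (C : Matrix (Fin p) (Fin n) ℝ) (γ : ℝ) (K : Matrix (Fin m) (Fin p) ℝ) : Prop :=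
  Real.sqrt γ * specRad (Acl A B C K) < 1

/-- The solution `P_K(γ) = Σ_{t} γ^t ((A−BKC)ᵀ)^t (Q + CᵀKᵀRKC) (A−BKC)^t` of the
discounted Lyapunov equation. -/
def Pmat (A : Matrix (Fin n) (Fin n) ℝ) (B : Matrix (Fin n) (Fin m) ℝ)
    (C : Matrix (Fin p) (Fin n) ℝ) (Q : Matrix (Fin n) (Fin n) ℝ) (R : Matrix (Fin m) (Fin m) ℝ)
    (γ : ℝ) (K : Matrix (Fin m) (Fin p) ℝ) : Matrix (Fin n) (Fin n) ℝ :=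
  ∑' t : ℕ, γ ^ t • ((Acl A B C K)ᵀ ^ t * (Q + Cᵀ * Kᵀ * R * K * C) * (Acl A B C K) ^ t)

/-- The Gramian `Σ_K(γ) = Σ_{t} γ^t (A−BKC)^t ((A−BKC)ᵀ)^t`. -/
def Smat (A : Matrix (Fin n) (Fin n) ℝ) (B : Matrix (Fin n) (Fin m) ℝ)
    (C : Matrix (Fin p) (Fin n) ℝ) (γ : ℝ) (K : Matrix (Fin m) (Fin p) ℝ) :
    Matrix (Fin n) (Fin n) ℝ :=
  ∑' t : ℕ, γ ^ t • ((Acl A B C K) ^ t * ((Acl A B C K)ᵀ) ^ t)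

/-- The discounted cost `J_γ(K) = Tr(P_K(γ))`. -/
def Jcost (A : Matrix (Fin n) (Fin n) ℝ) (B : Matrix (Fin n) (Fin m) ℝ)
    (C : Matrix (Fin p) (Fin n) ℝ) (Q : Matrix (Fin n) (Fin n) ℝ) (R : Matrix (Fin m) (Fin m) ℝ)
    (γ : ℝ) (K : Matrix (Fin m) (Fin p) ℝ) : ℝ :=
  (Pmat A B C Q R γ K).trace

/-- `E_K = (R + γBᵀP_K(γ)B)KC − γBᵀP_K(γ)A`. -/
def Egrad (A : Matrix (Fin n) (Fin n) ℝ) (B : Matrix (Fin n) (Fin m) ℝ)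
    (C : Matrix (Fin p) (Fin n) ℝ) (Q : Matrix (Fin n) (Fin n) ℝ) (R : Matrix (Fin m) (Fin m) ℝ)
    (γ : ℝ) (K : Matrix (Fin m) (Fin p) ℝ) : Matrix (Fin m) (Fin n) ℝ :=
  (R + γ • (Bᵀ * Pmat A B C Q R γ K * B)) * K * C - γ • (Bᵀ * Pmat A B C Q R γ K * A)

/-- The closed-form gradient `∇J_γ(K) = 2 E_K Σ_K(γ) Cᵀ`. -/
def gradJ (A : Matrix (Fin n) (Fin n) ℝ) (B : Matrix (Fin n) (Fin m) ℝ)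
    (C : Matrix (Fin p) (Fin n) ℝ) (Q : Matrix (Fin n) (Fin n) ℝ) (R : Matrix (Fin m) (Fin m) ℝ)
    (γ : ℝ) (K : Matrix (Fin m) (Fin p) ℝ) : Matrix (Fin m) (Fin p) ℝ :=
  (2 : ℝ) • (Egrad A B C Q R γ K * Smat A B C γ K * Cᵀ)

end

/-!
Write `M = A - BKC`, `Σ = Σ_K(γ)` and `s = tr Σ`. Since `Q + CᵀKᵀRKC ⪰ ℓ₀ I`, comparing the two
series termwise gives `ℓ₀ s ≤ J_γ(K) ≤ 2 Ĵ`. The series for `Σ` is `I` plus positive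
semidefinite terms, each dominated by its trace times `I`, so `I ⪯ Σ ⪯ s I`, and the Lyapunov
equation `Σ = I + γ M Σ Mᵀ` yields the contraction `γ M Σ Mᵀ = Σ - I ⪯ (1 - 1/s) Σ`. Iterating,
`γᵗ Mᵗ Mᵗᵀ ⪯ γᵗ Mᵗ Σ Mᵗᵀ ⪯ s (1 - 1/s)ᵗ I`. With `γ' = βγ`, `β = 1 + ζα`, the series for
`Σ_K(γ')` is dominated by a geometric series of ratio `b = β (1 - 1/s)`, and `α (s - 1) ≤ 1`
gives `1 - b ≥ (1 - ζ)/s`, so `Σ_K(γ') ⪯ s² / (1 - ζ) I ⪯ 4 Ĵ² / ((1 - ζ) ℓ₀²) I`.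
-/

open Filter

section Gramian

variable {ι : Type*} [Fintype ι]

lemma dotProduct_mul_mul_transpose_mulVec (A N : Matrix ι ι ℝ) (x : ι → ℝ) :
    x ⬝ᵥ (A * N * Aᵀ) *ᵥ x = (Aᵀ *ᵥ x) ⬝ᵥ N *ᵥ (Aᵀ *ᵥ x) := by
  rw [← mulVec_mulVec, ← mulVec_mulVec, dotProduct_mulVec, mulVec_transpose]

lemma dotProduct_self_nonneg (x : ι → ℝ) : 0 ≤ x ⬝ᵥ x := by
  simpa using dotProduct_self_star_nonneg x

lemma dotProduct_transpose_mulVec_le_trace_mul (A : Matrix ι ι ℝ) (x : ι → ℝ) :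
    (Aᵀ *ᵥ x) ⬝ᵥ (Aᵀ *ᵥ x) ≤ (A * Aᵀ).trace * (x ⬝ᵥ x) := by
  have hcol : ∀ j, (Aᵀ *ᵥ x) j * (Aᵀ *ᵥ x) j ≤ (∑ i, A i j * A i j) * (x ⬝ᵥ x) := by
    intro j
    simpa [mulVec, dotProduct, sq] using Finset.sum_mul_sq_le_sq_mul_sq Finset.univ (A · j) x
  calc (Aᵀ *ᵥ x) ⬝ᵥ (Aᵀ *ᵥ x) ≤ ∑ j, (∑ i, A i j * A i j) * (x ⬝ᵥ x) :=
        Finset.sum_le_sum fun j _ => hcol j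
    _ = (A * Aᵀ).trace * (x ⬝ᵥ x) := by
        rw [← Finset.sum_mul, Finset.sum_comm]
        simp [trace, mul_apply]

lemma HasSum.dotProduct_mulVec {β : Type*} {f : β → Matrix ι ι ℝ} {a : Matrix ι ι ℝ}
    (h : HasSum f a) (x y : ι → ℝ) : HasSum (fun t => x ⬝ᵥ f t *ᵥ y) (x ⬝ᵥ a *ᵥ y) := by
  simp only [dotProduct, mulVec, Finset.mul_sum]
  exact hasSum_sum fun i _ => hasSum_sum fun j _ =>
    ((Pi.hasSum.1 (Pi.hasSum.1 h i) j).mul_right (y j)).mul_left (x i)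

lemma HasSum.matrix_trace {β : Type*} {f : β → Matrix ι ι ℝ} {a : Matrix ι ι ℝ} (h : HasSum f a) :
    HasSum (fun t => (f t).trace) a.trace :=
  hasSum_sum fun i _ => Pi.hasSum.1 h.matrix_diag i

variable [DecidableEq ι]

def gramianTerm (γ : ℝ) (M : Matrix ι ι ℝ) (t : ℕ) : Matrix ι ι ℝ :=
  γ ^ t • (M ^ t * Mᵀ ^ t)

variable {γ : ℝ} {M S : Matrix ι ι ℝ}

lemma dotProduct_gramianTerm_mulVec (γ : ℝ) (M : Matrix ι ι ℝ) (t : ℕ) (x : ι → ℝ) :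
    x ⬝ᵥ gramianTerm γ M t *ᵥ x = γ ^ t * ((M ^ t)ᵀ *ᵥ x ⬝ᵥ (M ^ t)ᵀ *ᵥ x) := by
  have h := dotProduct_mul_mul_transpose_mulVec (M ^ t) 1 x
  rw [Matrix.mul_one, one_mulVec] at h
  rw [gramianTerm, smul_mulVec, dotProduct_smul, smul_eq_mul, ← transpose_pow, h]

lemma dotProduct_le_dotProduct_gramian_mulVec (hγ : 0 ≤ γ) (hS : HasSum (gramianTerm γ M) S)
    (x : ι → ℝ) : x ⬝ᵥ x ≤ x ⬝ᵥ S *ᵥ x := by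
  have h := le_hasSum (hS.dotProduct_mulVec x x) 0 fun t _ => by
    rw [dotProduct_gramianTerm_mulVec]
    exact mul_nonneg (pow_nonneg hγ t) (dotProduct_self_nonneg _)
  simpa [gramianTerm] using h

lemma dotProduct_gramian_mulVec_le_trace_mul (hγ : 0 ≤ γ) (hS : HasSum (gramianTerm γ M) S)
    (x : ι → ℝ) : x ⬝ᵥ S *ᵥ x ≤ S.trace * (x ⬝ᵥ x) := by
  refine hasSum_le (fun t => ?_) (hS.dotProduct_mulVec x x) (hS.matrix_trace.mul_right (x ⬝ᵥ x))
  rw [dotProduct_gramianTerm_mulVec, gramianTerm, trace_smul, smul_eq_mul, ← transpose_pow,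
    mul_assoc]
  exact mul_le_mul_of_nonneg_left (dotProduct_transpose_mulVec_le_trace_mul _ x) (pow_nonneg hγ t)

lemma one_le_trace_gramian [Nonempty ι] (hγ : 0 ≤ γ) (hS : HasSum (gramianTerm γ M) S) :
    1 ≤ S.trace := by
  obtain ⟨i⟩ := ‹Nonempty ι›
  have h := (dotProduct_le_dotProduct_gramian_mulVec hγ hS (Pi.single i 1)).trans
    (dotProduct_gramian_mulVec_le_trace_mul hγ hS (Pi.single i 1))
  simpa using h

lemma gramian_eq_one_add (hS : HasSum (gramianTerm γ M) S) : S = 1 + γ • (M * S * Mᵀ) := by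
  have hstep : ∀ t, gramianTerm γ M (t + 1) = γ • (M * gramianTerm γ M t * Mᵀ) := fun t => by
    rw [gramianTerm, gramianTerm, pow_succ' γ, pow_succ' M, pow_succ Mᵀ]
    simp only [Matrix.mul_smul, Matrix.smul_mul, smul_smul, Matrix.mul_assoc]
  have hshift : HasSum (fun t => gramianTerm γ M (t + 1)) (γ • (M * S * Mᵀ)) := by
    simpa only [hstep] using ((hS.mul_left M).mul_right Mᵀ).const_smul γ
  have h := (hasSum_nat_add_iff' 1).2 hS
  rw [Finset.sum_range_one, show gramianTerm γ M 0 = 1 by simp [gramianTerm]] at h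
  rw [← h.unique hshift, add_sub_cancel]

lemma gramianTerm_transpose (γ : ℝ) (M : Matrix ι ι ℝ) (t : ℕ) :
    (gramianTerm γ M t)ᵀ = gramianTerm γ M t := by
  rw [gramianTerm, transpose_smul, transpose_mul, ← transpose_pow, transpose_transpose,
    transpose_pow]

lemma gramian_transpose (hS : HasSum (gramianTerm γ M) S) : Sᵀ = S := by
  have hT : HasSum (gramianTerm γ M) Sᵀ := by
    simpa only [gramianTerm_transpose] using hS.matrix_transpose
  exact hT.unique hS

lemma dotProduct_gramian_mulVec_nonneg (hγ : 0 ≤ γ) (hS : HasSum (gramianTerm γ M) S)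
    (x : ι → ℝ) : 0 ≤ x ⬝ᵥ S *ᵥ x :=
  (hS.dotProduct_mulVec x x).nonneg fun t => by
    rw [dotProduct_gramianTerm_mulVec]
    exact mul_nonneg (pow_nonneg hγ t) (dotProduct_self_nonneg _)

lemma trace_gramian_nonneg (hγ : 0 ≤ γ) (hS : HasSum (gramianTerm γ M) S) : 0 ≤ S.trace :=
  hS.matrix_trace.nonneg fun t => by
    rw [gramianTerm, trace_smul, smul_eq_mul, ← transpose_pow]
    exact mul_nonneg (pow_nonneg hγ t) (posSemidef_self_mul_conjTranspose (M ^ t)).trace_nonneg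

lemma mul_dotProduct_conj_gramian_le (hγ : 0 ≤ γ) (hS : HasSum (gramianTerm γ M) S)
    (x : ι → ℝ) :
    γ * (x ⬝ᵥ (M * S * Mᵀ) *ᵥ x) ≤ (1 - 1 / S.trace) * (x ⬝ᵥ S *ᵥ x) := by
  have hlyap : γ * (x ⬝ᵥ (M * S * Mᵀ) *ᵥ x) = x ⬝ᵥ S *ᵥ x - x ⬝ᵥ x := by
    have h := congrArg (fun N => x ⬝ᵥ N *ᵥ x) (gramian_eq_one_add hS)
    simp only [add_mulVec, dotProduct_add, one_mulVec, smul_mulVec, dotProduct_smul,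
      smul_eq_mul] at h
    linarith
  have hdiv : x ⬝ᵥ S *ᵥ x / S.trace ≤ x ⬝ᵥ x :=
    div_le_of_le_mul₀ (trace_gramian_nonneg hγ hS) (dotProduct_self_nonneg x)
      (by linarith [dotProduct_gramian_mulVec_le_trace_mul hγ hS x, mul_comm (x ⬝ᵥ x) S.trace])
  rw [hlyap]
  linarith [show (1 - 1 / S.trace) * (x ⬝ᵥ S *ᵥ x) = x ⬝ᵥ S *ᵥ x - x ⬝ᵥ S *ᵥ x / S.trace by ring]

lemma one_sub_one_div_trace_gramian_nonneg [Nonempty ι] (hγ : 0 ≤ γ)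
    (hS : HasSum (gramianTerm γ M) S) : 0 ≤ 1 - 1 / S.trace := by
  have h := one_le_trace_gramian hγ hS
  exact sub_nonneg.2 (div_le_one_of_le₀ h (zero_le_one.trans h))

lemma pow_mul_dotProduct_conj_gramian_le [Nonempty ι] (hγ : 0 ≤ γ)
    (hS : HasSum (gramianTerm γ M) S) (t : ℕ) (x : ι → ℝ) :
    γ ^ t * (x ⬝ᵥ (M ^ t * S * (M ^ t)ᵀ) *ᵥ x) ≤ (1 - 1 / S.trace) ^ t * (x ⬝ᵥ S *ᵥ x) := by
  have hs := one_sub_one_div_trace_gramian_nonneg hγ hS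
  induction t with
  | zero => simp
  | succ t ih =>
    have hpeel : M ^ (t + 1) * S * (M ^ (t + 1))ᵀ = M ^ t * (M * S * Mᵀ) * (M ^ t)ᵀ := by
      simp only [pow_succ, transpose_mul, Matrix.mul_assoc]
    calc γ ^ (t + 1) * (x ⬝ᵥ (M ^ (t + 1) * S * (M ^ (t + 1))ᵀ) *ᵥ x)
        = γ ^ t * (γ * ((M ^ t)ᵀ *ᵥ x) ⬝ᵥ (M * S * Mᵀ) *ᵥ ((M ^ t)ᵀ *ᵥ x)) := by
          rw [hpeel, dotProduct_mul_mul_transpose_mulVec, pow_succ, mul_assoc]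
      _ ≤ γ ^ t * ((1 - 1 / S.trace) * ((M ^ t)ᵀ *ᵥ x) ⬝ᵥ S *ᵥ ((M ^ t)ᵀ *ᵥ x)) :=
          mul_le_mul_of_nonneg_left (mul_dotProduct_conj_gramian_le hγ hS _) (pow_nonneg hγ t)
      _ = (1 - 1 / S.trace) * (γ ^ t * (x ⬝ᵥ (M ^ t * S * (M ^ t)ᵀ) *ᵥ x)) := by
          rw [dotProduct_mul_mul_transpose_mulVec]; ring
      _ ≤ (1 - 1 / S.trace) ^ (t + 1) * (x ⬝ᵥ S *ᵥ x) :=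
          (mul_le_mul_of_nonneg_left ih hs).trans_eq (by ring)

lemma pow_mul_dotProduct_transpose_pow_mulVec_le [Nonempty ι] (hγ : 0 ≤ γ)
    (hS : HasSum (gramianTerm γ M) S) (t : ℕ) (x : ι → ℝ) :
    γ ^ t * ((M ^ t)ᵀ *ᵥ x ⬝ᵥ (M ^ t)ᵀ *ᵥ x) ≤ S.trace * (1 - 1 / S.trace) ^ t * (x ⬝ᵥ x) := by
  calc γ ^ t * ((M ^ t)ᵀ *ᵥ x ⬝ᵥ (M ^ t)ᵀ *ᵥ x)
      ≤ γ ^ t * (x ⬝ᵥ (M ^ t * S * (M ^ t)ᵀ) *ᵥ x) := by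
        rw [dotProduct_mul_mul_transpose_mulVec]
        exact mul_le_mul_of_nonneg_left (dotProduct_le_dotProduct_gramian_mulVec hγ hS _)
          (pow_nonneg hγ t)
    _ ≤ (1 - 1 / S.trace) ^ t * (x ⬝ᵥ S *ᵥ x) := pow_mul_dotProduct_conj_gramian_le hγ hS t x
    _ ≤ (1 - 1 / S.trace) ^ t * (S.trace * (x ⬝ᵥ x)) :=
        mul_le_mul_of_nonneg_left (dotProduct_gramian_mulVec_le_trace_mul hγ hS x)
          (pow_nonneg (one_sub_one_div_trace_gramian_nonneg hγ hS) t)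
    _ = S.trace * (1 - 1 / S.trace) ^ t * (x ⬝ᵥ x) := by ring

lemma dotProduct_gramian_mulVec_le_of_discount [Nonempty ι] (hγ : 0 ≤ γ)
    (hS : HasSum (gramianTerm γ M) S) {β : ℝ} {S' : Matrix ι ι ℝ} (hβ : 0 ≤ β)
    (hb : β * (1 - 1 / S.trace) < 1) (hS' : HasSum (gramianTerm (β * γ) M) S') (x : ι → ℝ) :
    x ⬝ᵥ S' *ᵥ x ≤ S.trace / (1 - β * (1 - 1 / S.trace)) * (x ⬝ᵥ x) := by
  set b := β * (1 - 1 / S.trace)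
  have hb0 : 0 ≤ b := mul_nonneg hβ (one_sub_one_div_trace_gramian_nonneg hγ hS)
  have hgeom := (hasSum_geometric_of_lt_one hb0 hb).mul_left (S.trace * (x ⬝ᵥ x))
  refine (hasSum_le (fun t => ?_) (hS'.dotProduct_mulVec x x) hgeom).trans_eq ?_
  · rw [dotProduct_gramianTerm_mulVec, mul_pow, mul_assoc]
    calc β ^ t * (γ ^ t * ((M ^ t)ᵀ *ᵥ x ⬝ᵥ (M ^ t)ᵀ *ᵥ x))
        ≤ β ^ t * (S.trace * (1 - 1 / S.trace) ^ t * (x ⬝ᵥ x)) :=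
          mul_le_mul_of_nonneg_left (pow_mul_dotProduct_transpose_pow_mulVec_le hγ hS t x)
            (pow_nonneg hβ t)
      _ = S.trace * (x ⬝ᵥ x) * b ^ t := by rw [mul_pow]; ring
  · field_simp

lemma mul_trace_gramian_le_trace {ℓ : ℝ} {W P : Matrix ι ι ℝ} (hγ : 0 ≤ γ)
    (hW : (W - ℓ • 1).PosSemidef) (hS : HasSum (gramianTerm γ M) S)
    (hP : HasSum (fun t : ℕ => γ ^ t • (Mᵀ ^ t * W * M ^ t)) P) : ℓ * S.trace ≤ P.trace := by
  refine hasSum_le (fun t => ?_) (hS.matrix_trace.mul_left ℓ) hP.matrix_trace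
  have h := (hW.conjTranspose_mul_mul_same (M ^ t)).trace_nonneg
  rw [conjTranspose_eq_transpose_of_trivial, Matrix.mul_sub, Matrix.sub_mul, trace_sub,
    Matrix.mul_smul, Matrix.smul_mul, Matrix.mul_one, trace_smul, smul_eq_mul,
    trace_mul_comm (M ^ t)ᵀ, sub_nonneg] at h
  rw [gramianTerm, trace_smul, trace_smul, smul_eq_mul, smul_eq_mul, ← transpose_pow]
  nlinarith [pow_nonneg hγ t]

end Gramian

section SpectralNorm

lemma spNorm_zero {a b : ℕ} : spNorm (0 : Matrix (Fin a) (Fin b) ℝ) = 0 := by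
  rw [spNorm, map_zero, map_zero, norm_zero]

lemma dotProduct_mulVec_self_le {ι : Type*} [Fintype ι] [DecidableEq ι] {N : Matrix ι ι ℝ}
    (hN : Nᵀ = N) {c : ℝ} (hc : 0 ≤ c) (h0 : ∀ x, 0 ≤ x ⬝ᵥ N *ᵥ x)
    (hle : ∀ x, x ⬝ᵥ N *ᵥ x ≤ c * (x ⬝ᵥ x)) (x : ι → ℝ) : N *ᵥ x ⬝ᵥ N *ᵥ x ≤ c ^ 2 * (x ⬝ᵥ x) := by
  set y := N *ᵥ x
  have hxy : x ⬝ᵥ N *ᵥ y = y ⬝ᵥ y := by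
    rw [dotProduct_mulVec, ← mulVec_transpose, hN]
  have hcs := (toBilin' N).apply_mul_apply_le_of_forall_zero_le
    (fun z => by rw [toBilin'_apply']; exact h0 z) x y
  simp only [toBilin'_apply', hxy] at hcs
  have hyy : (y ⬝ᵥ y) * (y ⬝ᵥ y) ≤ (c * (x ⬝ᵥ x)) * (c * (y ⬝ᵥ y)) :=
    hcs.trans (mul_le_mul (hle x) (hle y) (h0 y) (mul_nonneg hc (dotProduct_self_nonneg x)))
  rcases (dotProduct_self_nonneg y).eq_or_lt with hy | hy
  · rw [← hy]; exact mul_nonneg (sq_nonneg c) (dotProduct_self_nonneg x)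
  · nlinarith

lemma spNorm_le_of_dotProduct_mulVec_le {n : ℕ} {N : Matrix (Fin n) (Fin n) ℝ} (hN : Nᵀ = N) {c : ℝ}
    (hc : 0 ≤ c) (h0 : ∀ x, 0 ≤ x ⬝ᵥ N *ᵥ x) (hle : ∀ x, x ⬝ᵥ N *ᵥ x ≤ c * (x ⬝ᵥ x)) :
    spNorm N ≤ c := by
  refine ContinuousLinearMap.opNorm_le_bound _ hc fun x => ?_
  have hsq : ∀ v : Fin n → ℝ, ‖WithLp.toLp 2 v‖ ^ 2 = v ⬝ᵥ v := fun v => by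
    rw [EuclideanSpace.norm_sq_eq]; simp [dotProduct, sq]
  rw [← pow_le_pow_iff_left₀ (norm_nonneg _) (by positivity) two_ne_zero, mul_pow]
  have := dotProduct_mulVec_self_le hN hc h0 hle x.ofLp
  simpa [toLpLin_apply, ← hsq] using this

end SpectralNorm

section Summability

open scoped Matrix.Norms.Frobenius

variable {n : ℕ} {M : Matrix (Fin n) (Fin n) ℝ} {γ : ℝ}

lemma specRad_nonneg (M : Matrix (Fin n) (Fin n) ℝ) : 0 ≤ specRad M :=
  Real.sSup_nonneg (by rintro _ ⟨μ, -, rfl⟩; positivity)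

lemma spectralRadius_map_complex_le (M : Matrix (Fin n) (Fin n) ℝ) :
    spectralRadius ℂ (M.map (algebraMap ℝ ℂ)) ≤ ENNReal.ofReal (specRad M) := by
  refine iSup₂_le fun μ hμ => ?_
  have hbdd : BddAbove {r : ℝ | ∃ μ ∈ spectrum ℂ (M.map (algebraMap ℝ ℂ)), r = ‖μ‖} := by
    obtain ⟨c, hc⟩ := (spectrum.isBounded (𝕜 := ℂ) (M.map (algebraMap ℝ ℂ))).exists_norm_le
    exact ⟨c, by rintro r ⟨μ, hμ, rfl⟩; exact hc μ hμ⟩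
  rw [← enorm_eq_nnnorm, ← ofReal_norm]
  exact ENNReal.ofReal_le_ofReal (le_csSup hbdd ⟨μ, hμ, rfl⟩)

lemma eventually_norm_pow_le_pow {u : ℝ} (hu : specRad M < u) :
    ∀ᶠ t in atTop, ‖M ^ t‖ ≤ u ^ t := by
  have hu0 : 0 < u := (specRad_nonneg M).trans_lt hu
  have hρ : spectralRadius ℂ (M.map (algebraMap ℝ ℂ)) < ENNReal.ofReal u :=
    (spectralRadius_map_complex_le M).trans_lt ((ENNReal.ofReal_lt_ofReal_iff hu0).2 hu)
  filter_upwards [(spectrum.pow_norm_pow_one_div_tendsto_nhds_spectralRadius _).eventually_lt_const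
    hρ, eventually_ge_atTop 1] with t ht ht1
  have hmap : M.map (algebraMap ℝ ℂ) ^ t = (M ^ t).map (algebraMap ℝ ℂ) :=
    (map_pow (RingHom.mapMatrix (algebraMap ℝ ℂ)) M t).symm
  rw [hmap, frobenius_norm_map_eq _ _ fun a => by simp, ENNReal.ofReal_lt_ofReal_iff hu0, one_div,
    Real.rpow_inv_lt_iff_of_pos (norm_nonneg _) hu0.le (by positivity), Real.rpow_natCast] at ht
  exact ht.le

lemma exists_eventually_norm_pow_le (hγ : 0 < γ) (h : √γ * specRad M < 1) :
    ∃ u, γ * u ^ 2 < 1 ∧ ∀ᶠ t in atTop, ‖M ^ t‖ ≤ u ^ t := by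
  have hsq : 0 < √γ := Real.sqrt_pos.2 hγ
  obtain ⟨u, hρu, hu⟩ := exists_between ((lt_div_iff₀' hsq).2 h)
  have hu0 : 0 ≤ √γ * u := mul_nonneg hsq.le ((specRad_nonneg M).trans hρu.le)
  refine ⟨u, ?_, eventually_norm_pow_le_pow hρu⟩
  rw [← Real.sq_sqrt hγ.le, ← mul_pow]
  exact pow_lt_one₀ hu0 ((lt_div_iff₀' hsq).1 hu) two_ne_zero

lemma summable_smul_pow_mul_mul_pow {ι : Type*} [Fintype ι] [DecidableEq ι]
    {X Y N : Matrix ι ι ℝ} {u : ℝ} (hγ : 0 ≤ γ) (hu : γ * u ^ 2 < 1)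
    (hX : ∀ᶠ t in atTop, ‖X ^ t‖ ≤ u ^ t) (hY : ∀ᶠ t in atTop, ‖Y ^ t‖ ≤ u ^ t) :
    Summable fun t : ℕ => γ ^ t • (X ^ t * N * Y ^ t) := by
  refine Summable.of_norm_bounded_eventually
    ((summable_geometric_of_lt_one (by positivity) hu).mul_left ‖N‖) ?_
  rw [Nat.cofinite_eq_atTop]
  filter_upwards [hX, hY] with t hXt hYt
  have hut : 0 ≤ u ^ t := (norm_nonneg _).trans hXt
  calc ‖γ ^ t • (X ^ t * N * Y ^ t)‖ ≤ γ ^ t * (‖X ^ t‖ * ‖N‖ * ‖Y ^ t‖) := by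
        rw [norm_smul, Real.norm_of_nonneg (by positivity)]
        gcongr
        exact (norm_mul_le _ _).trans (mul_le_mul_of_nonneg_right (norm_mul_le _ _) (norm_nonneg _))
    _ ≤ γ ^ t * (u ^ t * ‖N‖ * u ^ t) := by gcongr
    _ = ‖N‖ * (γ * u ^ 2) ^ t := by ring

lemma summable_gramianTerm (hγ : 0 < γ) (h : √γ * specRad M < 1) :
    Summable (gramianTerm γ M) := by
  obtain ⟨u, hu, hM⟩ := exists_eventually_norm_pow_le hγ h
  have hMT : ∀ᶠ t in atTop, ‖Mᵀ ^ t‖ ≤ u ^ t := by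
    simpa only [← transpose_pow, frobenius_norm_transpose] using hM
  have h1 := summable_smul_pow_mul_mul_pow (N := 1) hγ.le hu hM hMT
  simp only [Matrix.mul_one] at h1
  exact h1

lemma summable_smul_transpose_pow_mul_mul_pow (hγ : 0 < γ) (h : √γ * specRad M < 1)
    (W : Matrix (Fin n) (Fin n) ℝ) :
    Summable fun t : ℕ => γ ^ t • (Mᵀ ^ t * W * M ^ t) := by
  obtain ⟨u, hu, hM⟩ := exists_eventually_norm_pow_le hγ h
  have hMT : ∀ᶠ t in atTop, ‖Mᵀ ^ t‖ ≤ u ^ t := by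
    simpa only [← transpose_pow, frobenius_norm_transpose] using hM
  exact summable_smul_pow_mul_mul_pow hγ.le hu hMT hM

end Summability

lemma discount_ratio_bounds {ℓ₀ Jhat ζ s : ℝ} (hℓ₀ : 0 < ℓ₀) (hζ : ζ ∈ Set.Ioo (0 : ℝ) 1)
    (hs : 1 ≤ s) (hsJ : ℓ₀ * s ≤ 2 * Jhat) :
    0 ≤ 1 + ζ * (ℓ₀ / (2 * Jhat - ℓ₀)) ∧ (1 + ζ * (ℓ₀ / (2 * Jhat - ℓ₀))) * (1 - 1 / s) < 1 ∧
      s / (1 - (1 + ζ * (ℓ₀ / (2 * Jhat - ℓ₀))) * (1 - 1 / s)) ≤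
        4 * Jhat ^ 2 / ((1 - ζ) * ℓ₀ ^ 2) := by
  obtain ⟨hζ0, hζ1⟩ := hζ
  set α := ℓ₀ / (2 * Jhat - ℓ₀)
  have hα : 0 ≤ α := div_nonneg hℓ₀.le (by nlinarith)
  have hαs : α * (s - 1) ≤ 1 := by
    rw [div_mul_eq_mul_div]
    exact div_le_one_of_le₀ (by nlinarith) (by nlinarith)
  have hgap : (1 - ζ) / s ≤ 1 - (1 + ζ * α) * (1 - 1 / s) := by
    rw [show 1 - (1 + ζ * α) * (1 - 1 / s) = (1 - ζ * (α * (s - 1))) / s by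
      field_simp; ring]
    gcongr
    nlinarith
  have hgap0 : 0 < (1 - ζ) / s := div_pos (by linarith) (by linarith)
  refine ⟨by positivity, by linarith, ?_⟩
  calc s / (1 - (1 + ζ * α) * (1 - 1 / s)) ≤ s / ((1 - ζ) / s) :=
        div_le_div_of_nonneg_left (by linarith) hgap0 hgap
    _ = s ^ 2 / (1 - ζ) := by field_simp
    _ ≤ (2 * Jhat / ℓ₀) ^ 2 / (1 - ζ) := by
        gcongr
        rw [le_div_iff₀ hℓ₀]
        linarith
    _ = 4 * Jhat ^ 2 / ((1 - ζ) * ℓ₀ ^ 2) := by field_simp; ring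

theorem stmt17_general
    {n m p : ℕ} (hn : 1 ≤ n)
    (A : Matrix (Fin n) (Fin n) ℝ) (B : Matrix (Fin n) (Fin m) ℝ) (C : Matrix (Fin p) (Fin n) ℝ)
    (Q : Matrix (Fin n) (Fin n) ℝ) (R : Matrix (Fin m) (Fin m) ℝ)
    (ℓ₀ : ℝ) (hℓ₀ : 0 < ℓ₀)
    (hQlb : (Q - ℓ₀ • (1 : Matrix (Fin n) (Fin n) ℝ)).PosSemidef)
    (hRlb : (R - ℓ₀ • (1 : Matrix (Fin m) (Fin m) ℝ)).PosSemidef)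
    (γ : ℝ) (hγ : γ ∈ Set.Ioo (0 : ℝ) 1)
    (K : Matrix (Fin m) (Fin p) ℝ) (hK : inS A B C γ K)
    (Jhat : ℝ) (hJhat : |Jcost A B C Q R γ K - Jhat| ≤ Jcost A B C Q R γ K / 2)
    (ζ : ℝ) (hζ : ζ ∈ Set.Ioo (0 : ℝ) 1)
    (γ' : ℝ) (hγ' : γ' = (1 + ζ * (ℓ₀ / (2 * Jhat - ℓ₀))) * γ) :
    spNorm (Smat A B C γ' K) ≤ 4 * Jhat ^ 2 / ((1 - ζ) * ℓ₀ ^ 2) := by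
  have : Nonempty (Fin n) := ⟨⟨0, hn⟩⟩
  have hS := (summable_gramianTerm hγ.1 hK).hasSum
  have hP := (summable_smul_transpose_pow_mul_mul_pow hγ.1 hK (Q + Cᵀ * Kᵀ * R * K * C)).hasSum
  have hR : R.PosSemidef := by simpa using hRlb.add (PosSemidef.one.smul hℓ₀.le)
  have hW : (Q + Cᵀ * Kᵀ * R * K * C - ℓ₀ • 1).PosSemidef := by
    convert hQlb.add (hR.conjTranspose_mul_mul_same (K * C)) using 1
    simp only [conjTranspose_eq_transpose_of_trivial, transpose_mul, Matrix.mul_assoc]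
    abel
  have hJ : Jcost A B C Q R γ K ≤ 2 * Jhat := by linarith [(abs_le.1 hJhat).2]
  obtain ⟨hβ, hb, hbound⟩ := discount_ratio_bounds hℓ₀ hζ (one_le_trace_gramian hγ.1.le hS)
    ((mul_trace_gramian_le_trace hγ.1.le hW hS hP).trans hJ)
  subst hγ'
  show spNorm (∑' t, gramianTerm _ (Acl A B C K) t) ≤ _
  by_cases hsum : Summable (gramianTerm ((1 + ζ * (ℓ₀ / (2 * Jhat - ℓ₀))) * γ) (Acl A B C K))
  · refine (spNorm_le_of_dotProduct_mulVec_le (gramian_transpose hsum.hasSum)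
      (div_nonneg (trace_gramian_nonneg hγ.1.le hS) (sub_nonneg.2 hb.le))
      (dotProduct_gramian_mulVec_nonneg (mul_nonneg hβ hγ.1.le) hsum.hasSum)
      (dotProduct_gramian_mulVec_le_of_discount hγ.1.le hS hβ hb hsum.hasSum)).trans hbound
  · rw [tsum_eq_zero_of_not_summable hsum, spNorm_zero]
    exact div_nonneg (by positivity) (mul_nonneg (by linarith [hζ.2]) (sq_nonneg _))

/-- the Gramian at the enlarged discount factor satisfies
`‖Σ_K(γ')‖ ≤ 4Jhat²/((1 − ζ)ℓ₀²)`. -/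
theorem stmt17
    {n m p : ℕ} (hn : 1 ≤ n) (hm : 1 ≤ m) (hp : 1 ≤ p)
    (A : Matrix (Fin n) (Fin n) ℝ) (B : Matrix (Fin n) (Fin m) ℝ) (C : Matrix (Fin p) (Fin n) ℝ)
    (Q : Matrix (Fin n) (Fin n) ℝ) (R : Matrix (Fin m) (Fin m) ℝ)
    (hQsymm : Q.IsSymm) (hRsymm : R.IsSymm)
    (ℓ₀ ℓ₁ ψ φ : ℝ) (hℓ₀ : 0 < ℓ₀) (hℓ₀₁ : ℓ₀ ≤ ℓ₁) (hψ : 1 ≤ ψ) (hφ : 1 ≤ φ)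
    (hQlb : (Q - ℓ₀ • (1 : Matrix (Fin n) (Fin n) ℝ)).PosSemidef)
    (hQub : (ℓ₁ • (1 : Matrix (Fin n) (Fin n) ℝ) - Q).PosSemidef)
    (hRlb : (R - ℓ₀ • (1 : Matrix (Fin m) (Fin m) ℝ)).PosSemidef)
    (hRub : (ℓ₁ • (1 : Matrix (Fin m) (Fin m) ℝ) - R).PosSemidef)
    (hB : spNorm B ≤ ψ) (hC : spNorm C ≤ φ)
    (γ : ℝ) (hγ : γ ∈ Set.Ioo (0 : ℝ) 1)
    (K : Matrix (Fin m) (Fin p) ℝ) (hK : inS A B C γ K)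
    (hJ : ℓ₀ < Jcost A B C Q R γ K)
    (Jhat : ℝ) (hJhat : |Jcost A B C Q R γ K - Jhat| ≤ Jcost A B C Q R γ K / 2)
    (ζ : ℝ) (hζ : ζ ∈ Set.Ioo (0 : ℝ) 1)
    (γ' : ℝ) (hγ' : γ' = (1 + ζ * (ℓ₀ / (2 * Jhat - ℓ₀))) * γ) :
    spNorm (Smat A B C γ' K) ≤ 4 * Jhat ^ 2 / ((1 - ζ) * ℓ₀ ^ 2) :=
  stmt17_general hn A B C Q R ℓ₀ hℓ₀ hQlb hRlb γ hγ K hK Jhat hJhat ζ hζ γ' hγ'
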